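/- arXiv:2104.10396 — 5 statements merged into one kernel-verified Lean document; each statement's English description precedes it below -/
import Mathlib

section
/- Let n ≥ 1 and let A be a symmetric doubly stochastic n×n real matrix. Let λ₂, λ_n ∈ ℝ with λ₂ ≤ 1 be such that wᵀAw ≤ λ₂‖w‖² for every w ∈ ℝⁿ with 1ᵀw = 0, and wᵀAw ≥ λ_n‖w‖² for every w ∈ ℝⁿ. Let 0 < η ≤ φ and let Γ = diag(γ₁,…,γₙ) with η ≤ γᵢ ≤ φ for all i, and set T := LΓ(I − A). Then for every v ∈ ℝⁿ with 1ᵀv = 0 and v ≠ 0: η(1 − λ₂)[φ + (n − 1)η]/√(n[φ² + (n − 1)η²]) ≤ ‖Tv‖/‖v‖ ≤ φ(1 − λ_n). -/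
open Finset Matrix

/-- A matrix is doubly stochastic if it has nonnegative entries and all row and
column sums equal to 1. -/
def IsDoublyStochastic {n : ℕ} (A : Matrix (Fin n) (Fin n) ℝ) : Prop :=
  (∀ i j, 0 ≤ A i j) ∧ (∀ i, ∑ j, A i j = 1) ∧ (∀ j, ∑ i, A i j = 1)

/-- The matrix L = I − (1/n)·11ᵀ. -/
noncomputable def Lmat (n : ℕ) : Matrix (Fin n) (Fin n) ℝ :=
  1 - (n : ℝ)⁻¹ • Matrix.of (fun _ _ => (1 : ℝ))

/-- The Euclidean norm of a vector in ℝⁿ. -/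
noncomputable def vnorm {n : ℕ} (v : Fin n → ℝ) : ℝ :=
  Real.sqrt (∑ i, v i ^ 2)

/-!
Write `u = (I - A) v`. Column sums of `A` give `1ᵀu = 0`, so `uᵀ L Γ u = uᵀ Γ u ≥ η ‖u‖²` and
Cauchy–Schwarz yields `‖Tv‖ ≥ η ‖u‖`; in the same way `vᵀu ≥ (1 - λ₂) ‖v‖²` yields
`‖u‖ ≥ (1 - λ₂) ‖v‖`. The factor `(φ + (n - 1) η) / √(n (φ² + (n - 1) η²))` is at most `1`,
since `n (φ² + (n - 1) η²) - (φ + (n - 1) η)² = (n - 1)(φ - η)²`.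
For the upper bound, `L` is an orthogonal projection, `‖Γ‖ ≤ φ`, and the symmetric matrix `I - A`
has quadratic form between `0` (as `A` is doubly stochastic) and `(1 - λₙ) ‖·‖²`, hence norm at most
`1 - λₙ`.
-/

section SymmetricForm

variable {ι : Type*} [Fintype ι]

lemma Matrix.IsSymm.dotProduct_mulVec_comm {M : Matrix ι ι ℝ} (hM : M.IsSymm) (x y : ι → ℝ) :
    y ⬝ᵥ M *ᵥ x = x ⬝ᵥ M *ᵥ y := by
  rw [dotProduct_comm, ← vecMul_transpose, hM.eq, dotProduct_mulVec]

lemma Matrix.IsSymm.sq_dotProduct_mulVec_le [DecidableEq ι] {M : Matrix ι ι ℝ} (hM : M.IsSymm)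
    (hpos : ∀ w, 0 ≤ w ⬝ᵥ M *ᵥ w) (x y : ι → ℝ) :
    (x ⬝ᵥ M *ᵥ y) ^ 2 ≤ (x ⬝ᵥ M *ᵥ x) * (y ⬝ᵥ M *ᵥ y) := by
  have h := LinearMap.BilinForm.apply_mul_apply_le_of_forall_zero_le (toLinearMap₂' ℝ M)
    (fun w => by simpa only [toLinearMap₂'_apply'] using hpos w) x y
  simp only [toLinearMap₂'_apply', hM.dotProduct_mulVec_comm x y] at h
  simpa only [sq] using h

end SymmetricForm

section Vnorm

variable {n : ℕ}

lemma vnorm_nonneg (v : Fin n → ℝ) : 0 ≤ vnorm v := Real.sqrt_nonneg _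

lemma vnorm_sq (v : Fin n → ℝ) : vnorm v ^ 2 = ∑ i, v i ^ 2 :=
  Real.sq_sqrt (sum_nonneg fun _ _ => sq_nonneg _)

lemma vnorm_pos {v : Fin n → ℝ} (hv : v ≠ 0) : 0 < vnorm v := by
  refine Real.sqrt_pos.mpr (lt_of_le_of_ne (sum_nonneg fun _ _ => sq_nonneg _) fun h => hv ?_)
  funext i
  exact pow_eq_zero_iff two_ne_zero |>.mp
    ((sum_eq_zero_iff_of_nonneg fun i _ => sq_nonneg (v i)).mp h.symm i (mem_univ i))

lemma dotProduct_le_vnorm_mul_vnorm (x y : Fin n → ℝ) : x ⬝ᵥ y ≤ vnorm x * vnorm y := by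
  rw [vnorm, vnorm, ← Real.sqrt_mul (sum_nonneg fun _ _ => sq_nonneg _)]
  exact Real.le_sqrt_of_sq_le (sum_mul_sq_le_sq_mul_sq univ x y)

lemma vnorm_le_mul_vnorm_of_sum_sq_le {x y : Fin n → ℝ} {c : ℝ} (hc : 0 ≤ c)
    (h : ∑ i, x i ^ 2 ≤ c ^ 2 * ∑ i, y i ^ 2) : vnorm x ≤ c * vnorm y := by
  rw [vnorm, vnorm, ← Real.sqrt_sq hc, ← Real.sqrt_mul (sq_nonneg c)]
  exact Real.sqrt_le_sqrt h

lemma mul_vnorm_le_vnorm_of_mul_sum_sq_le_dotProduct {x y : Fin n → ℝ} {c : ℝ}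
    (h : c * ∑ i, x i ^ 2 ≤ x ⬝ᵥ y) : c * vnorm x ≤ vnorm y := by
  rcases (vnorm_nonneg x).eq_or_lt with hx | hx
  · rw [← hx, mul_zero]; exact vnorm_nonneg y
  · have := h.trans (dotProduct_le_vnorm_mul_vnorm x y)
    rw [← vnorm_sq, sq, ← mul_assoc, mul_comm (vnorm x) (vnorm y)] at this
    exact le_of_mul_le_mul_right this hx

end Vnorm

lemma vnorm_mulVec_le_of_isSymm {n : ℕ} {M : Matrix (Fin n) (Fin n) ℝ} (hM : M.IsSymm)
    (hpos : ∀ w, 0 ≤ w ⬝ᵥ M *ᵥ w) {c : ℝ} (hle : ∀ w, w ⬝ᵥ M *ᵥ w ≤ c * ∑ i, w i ^ 2)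
    (v : Fin n → ℝ) : vnorm (M *ᵥ v) ≤ c * vnorm v := by
  rcases eq_or_ne v 0 with rfl | hv
  · simp [vnorm]
  have hc : 0 ≤ c := by
    have hv2 := hle v
    rw [← vnorm_sq] at hv2
    exact nonneg_of_mul_nonneg_left ((hpos v).trans hv2) (pow_pos (vnorm_pos hv) 2)
  set u := M *ᵥ v
  have hnorm : ∀ w : Fin n → ℝ, 0 ≤ c * ∑ i, w i ^ 2 :=
    fun w => mul_nonneg hc (sum_nonneg fun _ _ => sq_nonneg _)
  -- `‖Mv‖² = v ⬝ M(Mv)` is bounded by Cauchy–Schwarz for the semi-inner product `x ⬝ My`.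
  have key : (∑ i, u i ^ 2) ^ 2 ≤ (c * ∑ i, v i ^ 2) * (c * ∑ i, u i ^ 2) :=
    calc (∑ i, u i ^ 2) ^ 2 = (v ⬝ᵥ M *ᵥ u) ^ 2 := by
          rw [← hM.dotProduct_mulVec_comm]; simp only [dotProduct, sq]; rfl
      _ ≤ (v ⬝ᵥ M *ᵥ v) * (u ⬝ᵥ M *ᵥ u) := hM.sq_dotProduct_mulVec_le hpos v u
      _ ≤ _ := mul_le_mul (hle v) (hle u) (hpos u) (hnorm v)
  refine vnorm_le_mul_vnorm_of_sum_sq_le hc ?_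
  rcases (sum_nonneg fun i _ => sq_nonneg (u i)).eq_or_lt with h0 | hu
  · rw [← h0]; positivity
  · nlinarith

lemma add_mul_le_sqrt_mul {m : ℝ} (hm : 1 ≤ m) (a b : ℝ) :
    a + (m - 1) * b ≤ √(m * (a ^ 2 + (m - 1) * b ^ 2)) :=
  Real.le_sqrt_of_sq_le (by nlinarith [mul_nonneg (sub_nonneg.2 hm) (sq_nonneg (a - b))])

namespace IsDoublyStochastic

variable {n : ℕ} {A : Matrix (Fin n) (Fin n) ℝ}

lemma sum_mulVec (hA : IsDoublyStochastic A) (v : Fin n → ℝ) : ∑ i, (A *ᵥ v) i = ∑ i, v i := by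
  simp only [mulVec, dotProduct]
  rw [sum_comm]
  simp_rw [← sum_mul, hA.2.2, one_mul]

lemma dotProduct_mulVec_le (hA : IsDoublyStochastic A) (w : Fin n → ℝ) :
    w ⬝ᵥ A *ᵥ w ≤ ∑ i, w i ^ 2 := by
  obtain ⟨hA0, hrow, hcol⟩ := hA
  -- Row and column sums give `2 (‖w‖² - w ⬝ Aw) = ∑ᵢⱼ Aᵢⱼ (wᵢ - wⱼ)²`.
  have hrow' : ∑ i, w i ^ 2 = ∑ i, ∑ j, A i j * w i ^ 2 := by
    simp_rw [← sum_mul, hrow, one_mul]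
  have hcol' : ∑ i, w i ^ 2 = ∑ i, ∑ j, A i j * w j ^ 2 := by
    rw [sum_comm]; simp_rw [← sum_mul, hcol, one_mul]
  have hform : w ⬝ᵥ A *ᵥ w = ∑ i, ∑ j, A i j * (w i * w j) := by
    simp only [dotProduct, mulVec, mul_sum]
    exact sum_congr rfl fun i _ => sum_congr rfl fun j _ => by ring
  have hsq : ∑ i, ∑ j, A i j * (w i - w j) ^ 2 =
      ∑ i, ∑ j, A i j * w i ^ 2 + ∑ i, ∑ j, A i j * w j ^ 2 -
        2 * ∑ i, ∑ j, A i j * (w i * w j) := by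
    simp only [mul_sum, ← sum_add_distrib, ← sum_sub_distrib]
    exact sum_congr rfl fun i _ => sum_congr rfl fun j _ => by ring
  have := sum_nonneg fun i (_ : i ∈ univ) =>
    sum_nonneg fun j (_ : j ∈ univ) => mul_nonneg (hA0 i j) (sq_nonneg (w i - w j))
  linarith

end IsDoublyStochastic

lemma dotProduct_one_sub_mulVec {ι : Type*} [Fintype ι] [DecidableEq ι] (A : Matrix ι ι ℝ)
    (w : ι → ℝ) : w ⬝ᵥ (1 - A) *ᵥ w = ∑ i, w i ^ 2 - w ⬝ᵥ A *ᵥ w := by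
  rw [sub_mulVec, one_mulVec, dotProduct_sub]
  simp only [dotProduct, sq]

section OneSubMulVec

variable {n : ℕ} {A : Matrix (Fin n) (Fin n) ℝ}

lemma IsDoublyStochastic.sum_one_sub_mulVec (hA : IsDoublyStochastic A) (v : Fin n → ℝ) :
    ∑ i, ((1 - A) *ᵥ v) i = 0 := by
  simp only [sub_mulVec, one_mulVec, Pi.sub_apply, sum_sub_distrib, hA.sum_mulVec, sub_self]

lemma IsDoublyStochastic.vnorm_one_sub_mulVec_le (hA : IsDoublyStochastic A) (hAsym : A.IsSymm)
    {lam : ℝ} (hlam : ∀ w : Fin n → ℝ, lam * ∑ i, w i ^ 2 ≤ w ⬝ᵥ A *ᵥ w) (v : Fin n → ℝ) :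
    vnorm ((1 - A) *ᵥ v) ≤ (1 - lam) * vnorm v := by
  refine vnorm_mulVec_le_of_isSymm (isSymm_one.sub hAsym) (fun w => ?_) (fun w => ?_) v
  · rw [dotProduct_one_sub_mulVec, sub_nonneg]; exact hA.dotProduct_mulVec_le w
  · rw [dotProduct_one_sub_mulVec]; linarith [hlam w]

lemma mul_vnorm_le_vnorm_one_sub_mulVec {lam : ℝ} {v : Fin n → ℝ}
    (hv : v ⬝ᵥ A *ᵥ v ≤ lam * ∑ i, v i ^ 2) : (1 - lam) * vnorm v ≤ vnorm ((1 - A) *ᵥ v) :=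
  mul_vnorm_le_vnorm_of_mul_sum_sq_le_dotProduct (by rw [dotProduct_one_sub_mulVec]; linarith)

end OneSubMulVec

section Lmat

variable {n : ℕ}

lemma Lmat_mulVec (x : Fin n → ℝ) : Lmat n *ᵥ x = fun i => x i - (n : ℝ)⁻¹ * ∑ j, x j := by
  funext i
  simp only [Lmat, sub_mulVec, one_mulVec, smul_mulVec, Pi.sub_apply, Pi.smul_apply, smul_eq_mul]
  simp [mulVec, dotProduct]

lemma sum_Lmat_mulVec (x : Fin n → ℝ) : ∑ i, (Lmat n *ᵥ x) i = 0 := by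
  rcases Nat.eq_zero_or_pos n with rfl | hn
  · simp
  · simp only [Lmat_mulVec, sum_sub_distrib, sum_const, card_univ, Fintype.card_fin, nsmul_eq_mul]
    field_simp
    ring

lemma dotProduct_Lmat_mulVec {u : Fin n → ℝ} (hu : ∑ i, u i = 0) (x : Fin n → ℝ) :
    u ⬝ᵥ Lmat n *ᵥ x = u ⬝ᵥ x := by
  simp only [Lmat_mulVec, dotProduct, mul_sub, sum_sub_distrib, ← sum_mul, hu, zero_mul, sub_zero]

lemma vnorm_Lmat_mulVec_le (x : Fin n → ℝ) : vnorm (Lmat n *ᵥ x) ≤ vnorm x := by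
  -- `L` is the orthogonal projection onto `1ᗮ`, so `‖Lx‖² = Lx ⬝ x`.
  simpa only [one_mul] using mul_vnorm_le_vnorm_of_mul_sum_sq_le_dotProduct (c := 1)
    (x := Lmat n *ᵥ x) (y := x) (by
      rw [one_mul, ← dotProduct_Lmat_mulVec (sum_Lmat_mulVec x)]
      simp only [dotProduct, sq, le_refl])

lemma mul_vnorm_le_vnorm_Lmat_mulVec_diagonal_mulVec {u γ : Fin n → ℝ} (hu : ∑ i, u i = 0)
    {η : ℝ} (hγ : ∀ i, η ≤ γ i) : η * vnorm u ≤ vnorm (Lmat n *ᵥ diagonal γ *ᵥ u) := by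
  refine mul_vnorm_le_vnorm_of_mul_sum_sq_le_dotProduct ?_
  rw [dotProduct_Lmat_mulVec hu, mul_sum]
  simp only [dotProduct, mulVec_diagonal]
  exact sum_le_sum fun i _ => by nlinarith [hγ i, sq_nonneg (u i)]

end Lmat

lemma vnorm_diagonal_mulVec_le {n : ℕ} {γ : Fin n → ℝ} {φ : ℝ} (hφ : 0 ≤ φ)
    (hγ : ∀ i, |γ i| ≤ φ) (u : Fin n → ℝ) : vnorm (diagonal γ *ᵥ u) ≤ φ * vnorm u := by
  refine vnorm_le_mul_vnorm_of_sum_sq_le hφ ?_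
  simp only [mulVec_diagonal, mul_pow, mul_sum]
  exact sum_le_sum fun i _ => mul_le_mul_of_nonneg_right
    (sq_le_sq' (neg_le_of_abs_le (hγ i)) (le_of_abs_le (hγ i))) (sq_nonneg _)

/-- two-sided singular-value-type bounds for T = LΓ(I − A). -/
theorem stmt_1 (n : ℕ) (hn : 1 ≤ n)
    (A : Matrix (Fin n) (Fin n) ℝ) (hAsym : A.IsSymm) (hAds : IsDoublyStochastic A)
    (lam2 lamn : ℝ) (hlam2 : lam2 ≤ 1)
    (hA2 : ∀ w : Fin n → ℝ, ∑ i, w i = 0 → w ⬝ᵥ A.mulVec w ≤ lam2 * ∑ i, w i ^ 2)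
    (hAn : ∀ w : Fin n → ℝ, lamn * ∑ i, w i ^ 2 ≤ w ⬝ᵥ A.mulVec w)
    (η φ : ℝ) (hη : 0 < η) (hηφ : η ≤ φ)
    (γ : Fin n → ℝ) (hγl : ∀ i, η ≤ γ i) (hγu : ∀ i, γ i ≤ φ)
    (v : Fin n → ℝ) (hv1 : ∑ i, v i = 0) (hv0 : v ≠ 0) :
    η * (1 - lam2) * (φ + (n - 1) * η) / Real.sqrt (n * (φ ^ 2 + (n - 1) * η ^ 2)) ≤
        vnorm ((Lmat n * Matrix.diagonal γ * (1 - A)).mulVec v) / vnorm v ∧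
      vnorm ((Lmat n * Matrix.diagonal γ * (1 - A)).mulVec v) / vnorm v ≤ φ * (1 - lamn) := by
  set u := (1 - A) *ᵥ v
  have hT : (Lmat n * diagonal γ * (1 - A)) *ᵥ v = Lmat n *ᵥ diagonal γ *ᵥ u := by
    simp only [u, mulVec_mulVec, Matrix.mul_assoc]
  have hφ : 0 ≤ φ := hη.le.trans hηφ
  have hratio : (φ + (n - 1) * η) / √(n * (φ ^ 2 + (n - 1) * η ^ 2)) ≤ 1 :=
    div_le_one_of_le₀ (add_mul_le_sqrt_mul (by exact_mod_cast hn) φ η) (Real.sqrt_nonneg _)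
  rw [hT, le_div_iff₀ (vnorm_pos hv0), div_le_iff₀ (vnorm_pos hv0)]
  constructor
  · calc η * (1 - lam2) * (φ + (n - 1) * η) / √(n * (φ ^ 2 + (n - 1) * η ^ 2)) * vnorm v
        = η * (1 - lam2) * vnorm v * ((φ + (n - 1) * η) / √(n * (φ ^ 2 + (n - 1) * η ^ 2))) := by
          ring
      _ ≤ η * (1 - lam2) * vnorm v :=
          mul_le_of_le_one_right
            (mul_nonneg (mul_nonneg hη.le (sub_nonneg.2 hlam2)) (vnorm_nonneg v)) hratio
      _ = η * ((1 - lam2) * vnorm v) := by ring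
      _ ≤ η * vnorm u := by gcongr; exact mul_vnorm_le_vnorm_one_sub_mulVec (hA2 v hv1)
      _ ≤ vnorm (Lmat n *ᵥ diagonal γ *ᵥ u) :=
          mul_vnorm_le_vnorm_Lmat_mulVec_diagonal_mulVec (hAds.sum_one_sub_mulVec v) hγl
  · calc vnorm (Lmat n *ᵥ diagonal γ *ᵥ u) ≤ vnorm (diagonal γ *ᵥ u) := vnorm_Lmat_mulVec_le _
      _ ≤ φ * vnorm u :=
          vnorm_diagonal_mulVec_le hφ (fun i => abs_le.2 ⟨by linarith [hγl i], hγu i⟩) u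
      _ ≤ φ * ((1 - lamn) * vnorm v) := by gcongr; exact hAds.vnorm_one_sub_mulVec_le hAsym hAn v
      _ = φ * (1 - lamn) * vnorm v := by ring
end

section
/- Let n ≥ 1, let W(0), W(1), … be n×n doubly stochastic matrices, let f₁,…,f_n : ℝ → ℝ be differentiable, let d, x(0) ∈ ℝⁿ and α, β ∈ ℝ, and define sequences x, y : ℕ → ℝⁿ by y(0) = x(0) − d, x(k+1) = x(k) − αy(k) − β(I − W(k))∇f(x(k)) and y(k+1) = W(k)y(k) + x(k+1) − x(k). Then for every k ≥ 0: 1ᵀx(k) − 1ᵀd = (1 − α)ᵏ (1ᵀx(0) − 1ᵀd). -/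
open Finset Matrix

lemma IsDoublyStochastic.mem_colStochastic {n : ℕ} {A : Matrix (Fin n) (Fin n) ℝ}
    (hA : IsDoublyStochastic A) : A ∈ colStochastic ℝ (Fin n) :=
  mem_colStochastic_iff_sum.2 ⟨hA.1, hA.2.2⟩

lemma sum_one_sub_mulVec_of_mem_colStochastic {R ι : Type*} [Fintype ι] [DecidableEq ι]
    [Ring R] [PartialOrder R] [IsOrderedRing R] {M : Matrix ι ι R}
    (hM : M ∈ colStochastic R ι) (v : ι → R) : ∑ i, ((1 - M) *ᵥ v) i = 0 := by
  simp only [sub_mulVec, one_mulVec, Pi.sub_apply, sum_sub_distrib,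
    sum_mulVec_of_mem_colStochastic hM, sub_self]

theorem stmt_8_general (n : ℕ)
    (W : ℕ → Matrix (Fin n) (Fin n) ℝ) (hW : ∀ k, IsDoublyStochastic (W k))
    (f : Fin n → ℝ → ℝ)
    (d : Fin n → ℝ) (α β : ℝ)
    (x y : ℕ → Fin n → ℝ)
    (hy0 : y 0 = x 0 - d)
    (hxrec : ∀ k, x (k + 1) =
      x k - α • y k - β • ((1 - W k).mulVec (fun i => deriv (f i) (x k i))))
    (hyrec : ∀ k, y (k + 1) = (W k).mulVec (y k) + x (k + 1) - x k) :
    ∀ k, ∑ i, x k i - ∑ i, d i = (1 - α) ^ k * (∑ i, x 0 i - ∑ i, d i) := by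
  have hW_col k := (hW k).mem_colStochastic
  have hx_sum k : ∑ i, x (k + 1) i = ∑ i, x k i - α * ∑ i, y k i := by
    simp only [hxrec k, Pi.sub_apply, Pi.smul_apply, smul_eq_mul, sum_sub_distrib, ← mul_sum,
      sum_one_sub_mulVec_of_mem_colStochastic (hW_col k), mul_zero, sub_zero]
  -- `y` tracks the total deviation, because `W k` preserves sums.
  have hy_sum k : ∑ i, y k i = ∑ i, x k i - ∑ i, d i := by
    induction k with
    | zero => simp only [hy0, Pi.sub_apply, sum_sub_distrib]
    | succ k ih =>
      simp only [hyrec k, Pi.add_apply, Pi.sub_apply, sum_sub_distrib, sum_add_distrib,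
        sum_mulVec_of_mem_colStochastic (hW_col k), ih]
      ring
  intro k
  induction k with
  | zero => rw [pow_zero, one_mul]
  | succ k ih =>
    rw [hx_sum, hy_sum, pow_succ, mul_comm _ (1 - α), mul_assoc, ← ih]
    ring

/-- geometric decay of the total deviation 1ᵀx(k) − 1ᵀd along the
algorithm. -/
theorem stmt_8 (n : ℕ) (hn : 1 ≤ n)
    (W : ℕ → Matrix (Fin n) (Fin n) ℝ) (hW : ∀ k, IsDoublyStochastic (W k))
    (f : Fin n → ℝ → ℝ) (hf : ∀ i, Differentiable ℝ (f i))
    (d : Fin n → ℝ) (α β : ℝ)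
    (x y : ℕ → Fin n → ℝ)
    (hy0 : y 0 = x 0 - d)
    (hxrec : ∀ k, x (k + 1) =
      x k - α • y k - β • ((1 - W k).mulVec (fun i => deriv (f i) (x k i))))
    (hyrec : ∀ k, y (k + 1) = (W k).mulVec (y k) + x (k + 1) - x k) :
    ∀ k, ∑ i, x k i - ∑ i, d i = (1 - α) ^ k * (∑ i, x 0 i - ∑ i, d i) :=
  stmt_8_general n W hW f d α β x y hy0 hxrec hyrec
end

section
/- Let s₁, s₂ ∈ [0, 1), c₁, c₂ ≥ 0 with c₁c₂ < (1 − s₁)(1 − s₂), let m₀ ≥ 0 and q₀ ∈ (0, 1), and let a, b : ℕ → [0, ∞) be sequences satisfying a(k+1) ≤ s₁a(k) + c₁b(k) + m₀q₀ᵏ and b(k+1) ≤ s₂b(k) + c₂a(k) + m₀q₀ᵏ for every k ≥ 0. Then there exist m > 0 and q ∈ (0, 1) such that a(k) ≤ mqᵏ and b(k) ≤ mqᵏ for every k ≥ 0. -/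
/-!
Weight the two sequences into `V k = a k + t * b k`. The gain condition leaves room for a rate
`ρ < 1` above `q₀` and `s₂` with `c₁ * c₂ < (ρ - s₁) * (ρ - s₂)`, and then for a weight `t > 0` with
`s₁ + t * c₂ < ρ` and `c₁ < t * (ρ - s₂)`. With these, adding `t` times the second recursion to the
first gives the scalar recursion `V (k + 1) ≤ ρ * V k + (1 + t) * m₀ * q₀ ^ k`, whose solutions
decay like `ρ ^ k` because `q₀ < ρ`; both `a k` and `t * b k` are bounded by `V k`.
-/

open Filter Topology

lemma exists_lt_one_mul_sub_gt {s₁ s₂ c q₀ : ℝ} (hs₂ : s₂ < 1) (hq₀ : q₀ < 1)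
    (hc : c < (1 - s₁) * (1 - s₂)) :
    ∃ ρ, q₀ < ρ ∧ s₂ < ρ ∧ c < (ρ - s₁) * (ρ - s₂) ∧ ρ < 1 := by
  have hgain : ∀ᶠ ρ in 𝓝 (1 : ℝ), c < (ρ - s₁) * (ρ - s₂) :=
    (show Continuous fun ρ : ℝ => (ρ - s₁) * (ρ - s₂) by fun_prop).tendsto 1
      |>.eventually (eventually_gt_nhds hc)
  have hnear : ∀ᶠ ρ in 𝓝 (1 : ℝ), q₀ < ρ ∧ s₂ < ρ ∧ c < (ρ - s₁) * (ρ - s₂) :=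
    (eventually_gt_nhds hq₀).and ((eventually_gt_nhds hs₂).and hgain)
  obtain ⟨ρ, ⟨hq₀ρ, hs₂ρ, hgainρ⟩, hρ⟩ :=
    ((hnear.filter_mono nhdsWithin_le_nhds).and (self_mem_nhdsWithin (s := Set.Iio 1))).exists
  exact ⟨ρ, hq₀ρ, hs₂ρ, hgainρ, hρ⟩

lemma exists_pos_mul_lt_and_lt_mul {c₁ c₂ u v : ℝ} (hc₁ : 0 ≤ c₁) (hv : 0 < v)
    (h : c₁ * c₂ < u * v) : ∃ t, 0 < t ∧ t * c₂ < u ∧ c₁ < t * v := by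
  have hat : c₁ / v * c₂ < u := by rwa [div_mul_eq_mul_div, div_lt_iff₀ hv]
  have hnear : ∀ᶠ t in 𝓝[>] (c₁ / v), t * c₂ < u :=
    nhdsWithin_le_nhds <|
      (continuous_id.mul continuous_const).tendsto _ |>.eventually (eventually_lt_nhds hat)
  obtain ⟨t, htc₂, hlt⟩ := (hnear.and self_mem_nhdsWithin).exists
  exact ⟨t, (div_nonneg hc₁ hv.le).trans_lt hlt, htc₂, (div_lt_iff₀ hv).1 hlt⟩

/-- The `E * q ^ k` correction makes the bound `v k + E * q ^ k ≤ (v 0 + E) * ρ ^ k` inductive. -/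
lemma le_geometric_of_le_mul_add_geometric {v : ℕ → ℝ} {ρ q M : ℝ} (hq : 0 ≤ q) (hqρ : q < ρ)
    (hM : 0 ≤ M) (hv : ∀ k, v (k + 1) ≤ ρ * v k + M * q ^ k) (k : ℕ) :
    v k ≤ (v 0 + M / (ρ - q)) * ρ ^ k := by
  set E := M / (ρ - q)
  have hE : E * (ρ - q) = M := div_mul_cancel₀ _ (sub_pos.2 hqρ).ne'
  have hcorr : ∀ k, v k + E * q ^ k ≤ (v 0 + E) * ρ ^ k := by
    intro k
    induction k with
    | zero => simp
    | succ k ih =>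
      calc v (k + 1) + E * q ^ (k + 1)
          ≤ ρ * (v k + E * q ^ k) := by linear_combination hv k - q ^ k * hE
        _ ≤ ρ * ((v 0 + E) * ρ ^ k) := by gcongr; linarith
        _ = (v 0 + E) * ρ ^ (k + 1) := by ring
  have : 0 ≤ E * q ^ k := by
    have := div_nonneg hM (sub_pos.2 hqρ).le
    positivity
  linarith [hcorr k]

theorem stmt_9_general (s₁ s₂ c₁ c₂ m₀ q₀ : ℝ)
    (hs₂' : s₂ < 1)
    (hc₁ : 0 ≤ c₁) (hgain : c₁ * c₂ < (1 - s₁) * (1 - s₂))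
    (hm₀ : 0 ≤ m₀) (hq₀ : 0 < q₀) (hq₀' : q₀ < 1)
    (a b : ℕ → ℝ) (ha : ∀ k, 0 ≤ a k) (hb : ∀ k, 0 ≤ b k)
    (hra : ∀ k, a (k + 1) ≤ s₁ * a k + c₁ * b k + m₀ * q₀ ^ k)
    (hrb : ∀ k, b (k + 1) ≤ s₂ * b k + c₂ * a k + m₀ * q₀ ^ k) :
    ∃ m : ℝ, 0 < m ∧ ∃ q : ℝ, 0 < q ∧ q < 1 ∧
      ∀ k, a k ≤ m * q ^ k ∧ b k ≤ m * q ^ k := by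
  obtain ⟨ρ, hq₀ρ, hs₂ρ, hgainρ, hρ1⟩ := exists_lt_one_mul_sub_gt hs₂' hq₀' hgain
  obtain ⟨t, ht, htc₂, hc₁t⟩ := exists_pos_mul_lt_and_lt_mul hc₁ (sub_pos.2 hs₂ρ) hgainρ
  have hV : ∀ k, a (k + 1) + t * b (k + 1) ≤ ρ * (a k + t * b k) + (1 + t) * m₀ * q₀ ^ k := by
    intro k
    linarith [hra k, mul_le_mul_of_nonneg_left (hrb k) ht.le,
      mul_le_mul_of_nonneg_right htc₂.le (ha k), mul_le_mul_of_nonneg_right hc₁t.le (hb k)]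
  set D := a 0 + t * b 0 + (1 + t) * m₀ / (ρ - q₀)
  have hD k : a k + t * b k ≤ D * ρ ^ k :=
    le_geometric_of_le_mul_add_geometric (v := fun k => a k + t * b k) hq₀.le hq₀ρ
      (mul_nonneg (by linarith) hm₀) hV k
  have hρ : 0 < ρ := hq₀.trans hq₀ρ
  set m := max 1 (max D (D / t))
  have hDm : D ≤ m := le_max_of_le_right (le_max_left _ _)
  have hDtm : D / t ≤ m := le_max_of_le_right (le_max_right _ _)
  refine ⟨m, lt_max_of_lt_left one_pos, ρ, hρ, hρ1, fun k => ⟨?_, ?_⟩⟩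
  · calc a k ≤ D * ρ ^ k := by linarith [mul_nonneg ht.le (hb k), hD k]
      _ ≤ m * ρ ^ k := by gcongr
  · calc b k ≤ D / t * ρ ^ k := by
          rw [div_mul_eq_mul_div, le_div_iff₀ ht]; linarith [ha k, hD k]
      _ ≤ m * ρ ^ k := by gcongr

/-- coupled small-gain recursion lemma for two sequences. -/
theorem stmt_9 (s₁ s₂ c₁ c₂ m₀ q₀ : ℝ)
    (hs₁ : 0 ≤ s₁) (hs₁' : s₁ < 1) (hs₂ : 0 ≤ s₂) (hs₂' : s₂ < 1)
    (hc₁ : 0 ≤ c₁) (hc₂ : 0 ≤ c₂) (hgain : c₁ * c₂ < (1 - s₁) * (1 - s₂))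
    (hm₀ : 0 ≤ m₀) (hq₀ : 0 < q₀) (hq₀' : q₀ < 1)
    (a b : ℕ → ℝ) (ha : ∀ k, 0 ≤ a k) (hb : ∀ k, 0 ≤ b k)
    (hra : ∀ k, a (k + 1) ≤ s₁ * a k + c₁ * b k + m₀ * q₀ ^ k)
    (hrb : ∀ k, b (k + 1) ≤ s₂ * b k + c₂ * a k + m₀ * q₀ ^ k) :
    ∃ m : ℝ, 0 < m ∧ ∃ q : ℝ, 0 < q ∧ q < 1 ∧
      ∀ k, a k ≤ m * q ^ k ∧ b k ≤ m * q ^ k :=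
  stmt_9_general s₁ s₂ c₁ c₂ m₀ q₀ hs₂' hc₁ hgain hm₀ hq₀ hq₀' a b ha hb hra hrb
end

section
/- Let s₁, s₂, s₃ ∈ [0, 1) and let c₁₂, c₁₃, c₂₁, c₂₃, c₃₁, c₃₂ ≥ 0. Suppose there exist m₁, m₂, m₃ > 0 such that c₁₂m₂ + c₁₃m₃ < (1 − s₁)m₁, c₂₁m₁ + c₂₃m₃ < (1 − s₂)m₂, and c₃₁m₁ + c₃₂m₂ < (1 − s₃)m₃. If a, b, c : ℕ → [0, ∞) satisfy a(k+1) ≤ s₁a(k) + c₁₂b(k) + c₁₃c(k), b(k+1) ≤ s₂b(k) + c₂₁a(k) + c₂₃c(k), and c(k+1) ≤ s₃c(k) + c₃₁a(k) + c₃₂b(k) for every k ≥ 0, then there exist M > 0 and q ∈ (0, 1) such that a(k) ≤ Mqᵏ, b(k) ≤ Mqᵏ, and c(k) ≤ Mqᵏ for every k ≥ 0. -/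
/-!
Collect the three sequences into a vector `x k ∈ ℝ³` and the coefficients into a nonnegative
matrix `A`, so that `x (k + 1) ≤ A x k` componentwise. The weights say `A m < m` for a positive
vector `m`; by finiteness `A m ≤ q m` for some `q < 1`. Since `A` is monotone, the cone bound
`x k ≤ C q ^ k m`, true at `k = 0` for large `C`, propagates by induction.
-/

open Filter Topology Matrix

section

variable {ι : Type*}

theorem exists_lt_one_forall_le_mul [Finite ι] {u m : ι → ℝ} (hm : ∀ i, 0 < m i)
    (hum : ∀ i, u i < m i) : ∃ q, 0 < q ∧ q < 1 ∧ ∀ i, u i ≤ q * m i := by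
  have hq : ∀ i, ∀ᶠ q in 𝓝[<] (1 : ℝ), u i ≤ q * m i := fun i =>
    nhdsWithin_le_nhds <| (eventually_gt_nhds ((div_lt_one (hm i)).2 (hum i))).mono
      fun q hq => ((div_le_iff₀ (hm i)).1 hq.le)
  obtain ⟨q, hq, hq0, hq1⟩ := ((eventually_all.2 hq).and (Ioo_mem_nhdsLT one_pos)).exists
  exact ⟨q, hq0, hq1, hq⟩

theorem exists_pos_forall_le_mul [Finite ι] (v : ι → ℝ) {m : ι → ℝ} (hm : ∀ i, 0 < m i) :
    ∃ C, 0 < C ∧ ∀ i, v i ≤ C * m i := by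
  have hC : ∀ i, ∀ᶠ C in atTop, v i ≤ C * m i := fun i =>
    (eventually_ge_atTop (v i / m i)).mono fun C hC => (div_le_iff₀ (hm i)).1 hC
  obtain ⟨C, hC, hC0⟩ := ((eventually_all.2 hC).and (eventually_gt_atTop 0)).exists
  exact ⟨C, hC0, hC⟩

variable [Fintype ι]

theorem mulVec_le_mulVec_of_nonneg {A : Matrix ι ι ℝ} (hA : ∀ i j, 0 ≤ A i j) {v w : ι → ℝ}
    (hvw : ∀ i, v i ≤ w i) (i : ι) : (A *ᵥ v) i ≤ (A *ᵥ w) i :=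
  Finset.sum_le_sum fun j _ => mul_le_mul_of_nonneg_left (hvw j) (hA i j)

theorem le_mul_pow_mul_of_le_mulVec {A : Matrix ι ι ℝ} (hA : ∀ i j, 0 ≤ A i j) {m : ι → ℝ}
    {q C : ℝ} (hq : 0 ≤ q) (hC : 0 ≤ C) (hAm : ∀ i, (A *ᵥ m) i ≤ q * m i)
    {x : ℕ → ι → ℝ} (hx0 : ∀ i, x 0 i ≤ C * m i) (hx : ∀ k i, x (k + 1) i ≤ (A *ᵥ x k) i) :
    ∀ k i, x k i ≤ C * q ^ k * m i := by
  intro k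
  induction k with
  | zero => simpa using hx0
  | succ k ih =>
    intro i
    calc x (k + 1) i ≤ (A *ᵥ x k) i := hx k i
      _ ≤ (A *ᵥ ((C * q ^ k) • m)) i := mulVec_le_mulVec_of_nonneg hA (by simpa using ih) i
      _ = C * q ^ k * (A *ᵥ m) i := by rw [mulVec_smul, Pi.smul_apply, smul_eq_mul]
      _ ≤ C * q ^ k * (q * m i) := by gcongr; exact hAm i
      _ = C * q ^ (k + 1) * m i := by ring

theorem exists_geometric_bound_of_le_mulVec {A : Matrix ι ι ℝ} (hA : ∀ i j, 0 ≤ A i j)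
    {m : ι → ℝ} (hm : ∀ i, 0 < m i) (hAm : ∀ i, (A *ᵥ m) i < m i)
    {x : ℕ → ι → ℝ} (hx : ∀ k i, x (k + 1) i ≤ (A *ᵥ x k) i) :
    ∃ C, 0 < C ∧ ∃ q, 0 < q ∧ q < 1 ∧ ∀ k i, x k i ≤ C * q ^ k * m i := by
  obtain ⟨q, hq0, hq1, hq⟩ := exists_lt_one_forall_le_mul hm hAm
  obtain ⟨C, hC, hx0⟩ := exists_pos_forall_le_mul (x 0) hm
  exact ⟨C, hC, q, hq0, hq1, le_mul_pow_mul_of_le_mulVec hA hq0.le hC.le hq hx0 hx⟩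

end

theorem stmt_17_general (s₁ s₂ s₃ c₁₂ c₁₃ c₂₁ c₂₃ c₃₁ c₃₂ : ℝ)
    (hs₁ : 0 ≤ s₁) (hs₂ : 0 ≤ s₂)
    (hs₃ : 0 ≤ s₃)
    (hc₁₂ : 0 ≤ c₁₂) (hc₁₃ : 0 ≤ c₁₃) (hc₂₁ : 0 ≤ c₂₁)
    (hc₂₃ : 0 ≤ c₂₃) (hc₃₁ : 0 ≤ c₃₁) (hc₃₂ : 0 ≤ c₃₂)
    (hm : ∃ m₁ m₂ m₃ : ℝ, 0 < m₁ ∧ 0 < m₂ ∧ 0 < m₃ ∧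
      c₁₂ * m₂ + c₁₃ * m₃ < (1 - s₁) * m₁ ∧
      c₂₁ * m₁ + c₂₃ * m₃ < (1 - s₂) * m₂ ∧
      c₃₁ * m₁ + c₃₂ * m₂ < (1 - s₃) * m₃)
    (a b c : ℕ → ℝ)
    (hra : ∀ k, a (k + 1) ≤ s₁ * a k + c₁₂ * b k + c₁₃ * c k)
    (hrb : ∀ k, b (k + 1) ≤ s₂ * b k + c₂₁ * a k + c₂₃ * c k)
    (hrc : ∀ k, c (k + 1) ≤ s₃ * c k + c₃₁ * a k + c₃₂ * b k) :
    ∃ M : ℝ, 0 < M ∧ ∃ q : ℝ, 0 < q ∧ q < 1 ∧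
      ∀ k, a k ≤ M * q ^ k ∧ b k ≤ M * q ^ k ∧ c k ≤ M * q ^ k := by
  obtain ⟨m₁, m₂, m₃, hm₁, hm₂, hm₃, h₁, h₂, h₃⟩ := hm
  set A : Matrix (Fin 3) (Fin 3) ℝ := !![s₁, c₁₂, c₁₃; c₂₁, s₂, c₂₃; c₃₁, c₃₂, s₃]
  have hA : ∀ i j, 0 ≤ A i j := by
    intro i j; fin_cases i <;> fin_cases j <;> assumption
  have hm : ∀ i, 0 < ![m₁, m₂, m₃] i := by
    intro i; fin_cases i <;> assumption
  have hAm : ∀ i, (A *ᵥ ![m₁, m₂, m₃]) i < ![m₁, m₂, m₃] i := by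
    intro i; fin_cases i <;> simp [A, mulVec, dotProduct, Fin.sum_univ_three] <;> linarith
  have hx : ∀ k i, ![a (k + 1), b (k + 1), c (k + 1)] i ≤ (A *ᵥ ![a k, b k, c k]) i := by
    intro k i
    fin_cases i <;> simp [A, mulVec, dotProduct, Fin.sum_univ_three] <;>
      linarith [hra k, hrb k, hrc k]
  obtain ⟨C, hC, q, hq0, hq1, hbound⟩ := exists_geometric_bound_of_le_mulVec hA hm hAm
    (x := fun k => ![a k, b k, c k]) hx
  refine ⟨C * (m₁ + m₂ + m₃), by positivity, q, hq0, hq1, fun k => ?_⟩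
  have hCq : 0 ≤ C * q ^ k := by positivity
  refine ⟨(hbound k 0).trans ?_, (hbound k 1).trans ?_, (hbound k 2).trans ?_⟩ <;>
    simp <;> nlinarith

/-- three-sequence coupled small-gain recursion lemma. -/
theorem stmt_17 (s₁ s₂ s₃ c₁₂ c₁₃ c₂₁ c₂₃ c₃₁ c₃₂ : ℝ)
    (hs₁ : 0 ≤ s₁) (hs₁' : s₁ < 1) (hs₂ : 0 ≤ s₂) (hs₂' : s₂ < 1)
    (hs₃ : 0 ≤ s₃) (hs₃' : s₃ < 1)
    (hc₁₂ : 0 ≤ c₁₂) (hc₁₃ : 0 ≤ c₁₃) (hc₂₁ : 0 ≤ c₂₁)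
    (hc₂₃ : 0 ≤ c₂₃) (hc₃₁ : 0 ≤ c₃₁) (hc₃₂ : 0 ≤ c₃₂)
    (hm : ∃ m₁ m₂ m₃ : ℝ, 0 < m₁ ∧ 0 < m₂ ∧ 0 < m₃ ∧
      c₁₂ * m₂ + c₁₃ * m₃ < (1 - s₁) * m₁ ∧
      c₂₁ * m₁ + c₂₃ * m₃ < (1 - s₂) * m₂ ∧
      c₃₁ * m₁ + c₃₂ * m₂ < (1 - s₃) * m₃)
    (a b c : ℕ → ℝ) (ha : ∀ k, 0 ≤ a k) (hb : ∀ k, 0 ≤ b k) (hc : ∀ k, 0 ≤ c k)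
    (hra : ∀ k, a (k + 1) ≤ s₁ * a k + c₁₂ * b k + c₁₃ * c k)
    (hrb : ∀ k, b (k + 1) ≤ s₂ * b k + c₂₁ * a k + c₂₃ * c k)
    (hrc : ∀ k, c (k + 1) ≤ s₃ * c k + c₃₁ * a k + c₃₂ * b k) :
    ∃ M : ℝ, 0 < M ∧ ∃ q : ℝ, 0 < q ∧ q < 1 ∧
      ∀ k, a k ≤ M * q ^ k ∧ b k ≤ M * q ^ k ∧ c k ≤ M * q ^ k :=
  stmt_17_general s₁ s₂ s₃ c₁₂ c₁₃ c₂₁ c₂₃ c₃₁ c₃₂ hs₁ hs₂ hs₃ hc₁₂ hc₁₃ hc₂₁ hc₂₃ hc₃₁ hc₃₂ hm a b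
    c hra hrb hrc
end

section
/- Let n ≥ 1 and let W be a random n×n real matrix on a probability space, measurable and entrywise integrable, which is almost surely symmetric and doubly stochastic and whose diagonal entries are almost surely strictly positive (Wᵢᵢ > 0 a.s. for every i). If ‖E[W] − (1/n)·11ᵀ‖ < 1, then ‖E[W²] − (1/n)·11ᵀ‖ < 1, where E[·] denotes entrywise expectation and ‖·‖ is the operator norm induced by the Euclidean norm on ℝⁿ (so that for these symmetric matrices it equals the spectral radius). -/
open Finset Matrix MeasureTheory

/-!
For a symmetric doubly stochastic `W` and `J = (1/n)·11ᵀ`, the quadratic form of `W² - J` is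
`‖Wx‖² - ‖Jx‖²`, which lies in `[0, ‖x‖²]`. The defect `‖x‖² - ‖Wx‖² = ∑ᵢⱼ Wᵢⱼ (xⱼ - (Wx)ᵢ)²`
shows that, when the diagonal of `W` is positive, the value `‖x‖²` is attained only if `Wx = x`
and `Jx = 0`. Hence `E[W²] - J` is symmetric with quadratic form in `[0, ‖x‖²]`, so if its norm
were at least `1`, some unit vector `v` would have `⟨(E[W²] - J)v, v⟩ = 1`. Then almost surely
`Wv = v` and `Jv = 0`, so `(E[W] - J)v = v`, contradicting `‖E[W] - J‖ < 1`.
-/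

namespace IsDoublyStochastic

variable {n : ℕ} {W : Matrix (Fin n) (Fin n) ℝ}

theorem abs_le_one (hW : IsDoublyStochastic W) (i j : Fin n) : |W i j| ≤ 1 :=
  abs_le.mpr ⟨by linarith [hW.1 i j],
    (single_le_sum (fun k _ => hW.1 i k) (mem_univ j)).trans_eq (hW.2.1 i)⟩

theorem sum_sum_mul_sub_mulVec_sq (hW : IsDoublyStochastic W) (x : Fin n → ℝ) :
    ∑ i, ∑ j, W i j * (x j - (W *ᵥ x) i) ^ 2 = x ⬝ᵥ x - (W *ᵥ x) ⬝ᵥ (W *ᵥ x) := by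
  have hrow (i : Fin n) :
      ∑ j, W i j * (x j - (W *ᵥ x) i) ^ 2 = ∑ j, W i j * x j ^ 2 - (W *ᵥ x) i ^ 2 := by
    have hm : (W *ᵥ x) i = ∑ j, W i j * x j := rfl
    have expand : ∀ j, W i j * (x j - (W *ᵥ x) i) ^ 2
        = W i j * x j ^ 2 - 2 * (W *ᵥ x) i * (W i j * x j) + (W *ᵥ x) i ^ 2 * W i j :=
      fun j => by ring
    simp only [expand, sum_add_distrib, sum_sub_distrib, ← mul_sum, hW.2.1 i, ← hm]
    ring
  have hcol : ∑ i, ∑ j, W i j * x j ^ 2 = x ⬝ᵥ x := by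
    rw [sum_comm]
    simp only [← sum_mul, hW.2.2, one_mul, dotProduct, sq]
  rw [sum_congr rfl fun i _ => hrow i, sum_sub_distrib, hcol]
  simp only [dotProduct, sq]

theorem mulVec_dotProduct_self_le (hW : IsDoublyStochastic W) (x : Fin n → ℝ) :
    (W *ᵥ x) ⬝ᵥ (W *ᵥ x) ≤ x ⬝ᵥ x := by
  rw [← sub_nonneg, ← hW.sum_sum_mul_sub_mulVec_sq]
  exact sum_nonneg fun i _ => sum_nonneg fun j _ => mul_nonneg (hW.1 i j) (sq_nonneg _)

theorem mulVec_eq_self_of_le (hW : IsDoublyStochastic W) (hdiag : ∀ i, 0 < W i i)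
    {x : Fin n → ℝ} (hx : x ⬝ᵥ x ≤ (W *ᵥ x) ⬝ᵥ (W *ᵥ x)) : W *ᵥ x = x := by
  have hterm : ∀ i j, 0 ≤ W i j * (x j - (W *ᵥ x) i) ^ 2 :=
    fun i j => mul_nonneg (hW.1 i j) (sq_nonneg _)
  funext i
  have hii : W i i * (x i - (W *ᵥ x) i) ^ 2 ≤ 0 :=
    calc W i i * (x i - (W *ᵥ x) i) ^ 2
        ≤ ∑ j, W i j * (x j - (W *ᵥ x) i) ^ 2 :=
          single_le_sum (fun j _ => hterm i j) (mem_univ i)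
      _ ≤ ∑ i, ∑ j, W i j * (x j - (W *ᵥ x) i) ^ 2 :=
          single_le_sum (fun i _ => sum_nonneg fun j _ => hterm i j) (mem_univ i)
      _ ≤ 0 := by linarith [hW.sum_sum_mul_sub_mulVec_sq x]
  have hsq : (x i - (W *ᵥ x) i) ^ 2 = 0 :=
    le_antisymm (nonpos_of_mul_nonpos_right hii (hdiag i)) (sq_nonneg _)
  exact (sub_eq_zero.mp (pow_eq_zero_iff two_ne_zero |>.mp hsq)).symm

end IsDoublyStochastic

section AveragingMatrix

variable {n : ℕ}

noncomputable def averagingMatrix (n : ℕ) : Matrix (Fin n) (Fin n) ℝ :=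
  (n : ℝ)⁻¹ • Matrix.of fun _ _ => 1

theorem averagingMatrix_apply (i j : Fin n) : averagingMatrix n i j = (n : ℝ)⁻¹ := by
  simp [averagingMatrix]

theorem isSymm_averagingMatrix : (averagingMatrix n).IsSymm :=
  Matrix.IsSymm.ext fun i j => by simp only [averagingMatrix_apply]

theorem isDoublyStochastic_averagingMatrix (hn : n ≠ 0) :
    IsDoublyStochastic (averagingMatrix n) := by
  refine ⟨fun i j => ?_, fun i => ?_, fun j => ?_⟩ <;> simp [averagingMatrix_apply, hn]

theorem IsDoublyStochastic.averagingMatrix_mul {W : Matrix (Fin n) (Fin n) ℝ}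
    (hW : IsDoublyStochastic W) : averagingMatrix n * W = averagingMatrix n := by
  ext i j
  simp only [mul_apply, averagingMatrix_apply, ← mul_sum, hW.2.2 j, mul_one]

theorem averagingMatrix_mul_self (hn : n ≠ 0) :
    averagingMatrix n * averagingMatrix n = averagingMatrix n :=
  (isDoublyStochastic_averagingMatrix hn).averagingMatrix_mul

end AveragingMatrix

theorem Matrix.dotProduct_self_nonneg {ι R : Type*} [Fintype ι] [Ring R] [LinearOrder R]
    [IsStrictOrderedRing R] (v : ι → R) : 0 ≤ v ⬝ᵥ v :=
  Fintype.sum_nonneg fun i => mul_self_nonneg (v i)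

theorem Matrix.IsSymm.mul_self_mulVec_dotProduct {ι : Type*} [Fintype ι]
    {A : Matrix ι ι ℝ} (hA : A.IsSymm) (x : ι → ℝ) :
    ((A * A) *ᵥ x) ⬝ᵥ x = (A *ᵥ x) ⬝ᵥ (A *ᵥ x) := by
  rw [← mulVec_mulVec, dotProduct_comm, dotProduct_mulVec, ← mulVec_transpose, hA.eq]

theorem Matrix.IsSymm.mul_self_sub_averagingMatrix_mulVec_dotProduct {n : ℕ}
    {W : Matrix (Fin n) (Fin n) ℝ} (hWs : W.IsSymm) (hn : n ≠ 0) (x : Fin n → ℝ) :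
    ((W * W - averagingMatrix n) *ᵥ x) ⬝ᵥ x =
      (W *ᵥ x) ⬝ᵥ (W *ᵥ x) - (averagingMatrix n *ᵥ x) ⬝ᵥ (averagingMatrix n *ᵥ x) := by
  rw [sub_mulVec, sub_dotProduct, hWs.mul_self_mulVec_dotProduct,
    ← isSymm_averagingMatrix.mul_self_mulVec_dotProduct, averagingMatrix_mul_self hn]

namespace IsDoublyStochastic

variable {n : ℕ} {W : Matrix (Fin n) (Fin n) ℝ}

theorem averagingMatrix_mulVec_dotProduct_le (hW : IsDoublyStochastic W) (hn : n ≠ 0)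
    (x : Fin n → ℝ) :
    (averagingMatrix n *ᵥ x) ⬝ᵥ (averagingMatrix n *ᵥ x) ≤ (W *ᵥ x) ⬝ᵥ (W *ᵥ x) := by
  rw [← hW.averagingMatrix_mul, ← mulVec_mulVec]
  exact (isDoublyStochastic_averagingMatrix hn).mulVec_dotProduct_self_le _

theorem mul_self_sub_averagingMatrix_mulVec_dotProduct_nonneg (hW : IsDoublyStochastic W)
    (hWs : W.IsSymm) (hn : n ≠ 0) (x : Fin n → ℝ) :
    0 ≤ ((W * W - averagingMatrix n) *ᵥ x) ⬝ᵥ x := by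
  rw [hWs.mul_self_sub_averagingMatrix_mulVec_dotProduct hn, sub_nonneg]
  exact hW.averagingMatrix_mulVec_dotProduct_le hn x

theorem mul_self_sub_averagingMatrix_mulVec_dotProduct_le (hW : IsDoublyStochastic W)
    (hWs : W.IsSymm) (hn : n ≠ 0) (x : Fin n → ℝ) :
    ((W * W - averagingMatrix n) *ᵥ x) ⬝ᵥ x ≤ x ⬝ᵥ x := by
  rw [hWs.mul_self_sub_averagingMatrix_mulVec_dotProduct hn]
  linarith [hW.mulVec_dotProduct_self_le x,
    Matrix.dotProduct_self_nonneg (averagingMatrix n *ᵥ x)]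

theorem mulVec_eq_self_of_le_mul_self_sub_averagingMatrix (hW : IsDoublyStochastic W)
    (hWs : W.IsSymm) (hdiag : ∀ i, 0 < W i i) (hn : n ≠ 0) {x : Fin n → ℝ}
    (hx : x ⬝ᵥ x ≤ ((W * W - averagingMatrix n) *ᵥ x) ⬝ᵥ x) :
    W *ᵥ x = x ∧ averagingMatrix n *ᵥ x = 0 := by
  rw [hWs.mul_self_sub_averagingMatrix_mulVec_dotProduct hn] at hx
  have hWx := hW.mulVec_dotProduct_self_le x
  refine ⟨hW.mulVec_eq_self_of_le hdiag ?_, dotProduct_self_eq_zero.mp ?_⟩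
  · linarith [Matrix.dotProduct_self_nonneg (averagingMatrix n *ᵥ x)]
  · linarith [Matrix.dotProduct_self_nonneg (averagingMatrix n *ᵥ x)]

end IsDoublyStochastic

theorem ContinuousLinearMap.exists_norm_eq_one_opNorm_le_abs_inner_self
    {E : Type*} [NormedAddCommGroup E] [InnerProductSpace ℝ E] [FiniteDimensional ℝ E]
    [Nontrivial E] (T : E →L[ℝ] E) (hT : (T : E →ₗ[ℝ] E).IsSymmetric) :
    ∃ u : E, ‖u‖ = 1 ∧ ‖T‖ ≤ |inner ℝ (T u) u| := by
  obtain ⟨u, hu, hmax⟩ := (isCompact_sphere (0 : E) 1).exists_isMaxOn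
    (NormedSpace.sphere_nonempty.mpr zero_le_one)
    (f := fun x => |inner ℝ (T x) x|) (by fun_prop)
  refine ⟨u, by simpa using hu, ?_⟩
  rw [T.norm_eq_iSup_rayleighQuotient hT]
  refine ciSup_le fun x => ?_
  rcases eq_or_ne x 0 with rfl | hx
  · simp
  · have hsphere : ‖x‖⁻¹ • x ∈ Metric.sphere (0 : E) 1 := by
      simp [norm_smul, hx]
    rw [← T.rayleigh_smul x (inv_ne_zero (norm_ne_zero_iff.mpr hx))]
    simpa only [ContinuousLinearMap.rayleighQuotient, ContinuousLinearMap.reApplyInnerSelf_apply,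
      RCLike.re_to_real, mem_sphere_zero_iff_norm.mp hsphere, one_pow, div_one]
      using isMaxOn_iff.mp hmax _ hsphere

namespace Matrix

variable {ι : Type*} [Fintype ι] [DecidableEq ι]

theorem IsSymm.exists_dotProduct_self_eq_one_norm_toEuclideanCLM_le [Nonempty ι]
    {A : Matrix ι ι ℝ} (hA : A.IsSymm) :
    ∃ v : ι → ℝ, v ⬝ᵥ v = 1 ∧ ‖toEuclideanCLM (𝕜 := ℝ) A‖ ≤ |(A *ᵥ v) ⬝ᵥ v| := by
  have hsymm : (toEuclideanCLM (𝕜 := ℝ) A : EuclideanSpace ℝ ι →ₗ[ℝ] _).IsSymmetric := by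
    rw [coe_toEuclideanCLM_eq_toEuclideanLin, isSymmetric_toEuclideanLin_iff,
      isHermitian_iff_isSymm]
    exact hA
  obtain ⟨u, hu, hle⟩ :=
    (toEuclideanCLM (𝕜 := ℝ) A).exists_norm_eq_one_opNorm_le_abs_inner_self hsymm
  refine ⟨u.ofLp, ?_, ?_⟩
  · have h := real_inner_self_eq_norm_sq u
    rwa [hu, one_pow, EuclideanSpace.inner_eq_star_dotProduct, star_trivial] at h
  · rwa [real_inner_comm, inner_toEuclideanCLM, dotProduct_comm] at hle

theorem one_le_norm_toEuclideanCLM_of_mulVec_eq_self {A : Matrix ι ι ℝ} {v : ι → ℝ}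
    (hv : v ≠ 0) (hAv : A *ᵥ v = v) : 1 ≤ ‖toEuclideanCLM (𝕜 := ℝ) A‖ := by
  have h := (toEuclideanCLM (𝕜 := ℝ) A).le_opNorm (WithLp.toLp 2 v)
  rw [toEuclideanCLM_toLp, hAv] at h
  have hpos : 0 < ‖WithLp.toLp 2 v‖ := by simpa using hv
  nlinarith

end Matrix

section Integral

variable {Ω ι : Type*} [MeasurableSpace Ω] {μ : Measure Ω}

theorem isSymm_integral_of_ae {F : Ω → Matrix ι ι ℝ} (hF : ∀ᵐ ω ∂μ, (F ω).IsSymm) :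
    (Matrix.of fun i j => ∫ ω, F ω i j ∂μ).IsSymm :=
  IsSymm.ext fun i j => integral_congr_ae (hF.mono fun _ h => h.apply i j)

variable [Fintype ι]

theorem integrable_mul_apply {F G : Ω → Matrix ι ι ℝ}
    (hF : ∀ i j, Integrable (fun ω => F ω i j) μ) (hG : ∀ i j, Integrable (fun ω => G ω i j) μ)
    {C : ℝ} (hGC : ∀ᵐ ω ∂μ, ∀ i j, |G ω i j| ≤ C) (i j : ι) :
    Integrable (fun ω => (F ω * G ω) i j) μ := by
  simp only [mul_apply]
  exact integrable_finsetSum _ fun k _ =>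
    (hF i k).mul_bdd (hG k j).aestronglyMeasurable (hGC.mono fun ω h => h k j)

variable {F : Ω → Matrix ι ι ℝ}

theorem integrable_mulVec_apply (hF : ∀ i j, Integrable (fun ω => F ω i j) μ) (x : ι → ℝ) (i : ι) :
    Integrable (fun ω => (F ω *ᵥ x) i) μ :=
  integrable_finsetSum _ fun j _ => (hF i j).mul_const (x j)

theorem integral_mulVec_apply (hF : ∀ i j, Integrable (fun ω => F ω i j) μ) (x : ι → ℝ) (i : ι) :
    ∫ ω, (F ω *ᵥ x) i ∂μ = ((Matrix.of fun i j => ∫ ω, F ω i j ∂μ) *ᵥ x) i := by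
  simp only [mulVec, dotProduct, of_apply]
  rw [integral_finsetSum _ fun j _ => (hF i j).mul_const (x j)]
  simp only [integral_mul_const]

theorem integrable_mulVec_dotProduct (hF : ∀ i j, Integrable (fun ω => F ω i j) μ) (x y : ι → ℝ) :
    Integrable (fun ω => (F ω *ᵥ x) ⬝ᵥ y) μ :=
  integrable_finsetSum _ fun i _ => (integrable_mulVec_apply hF x i).mul_const (y i)

theorem integral_mulVec_dotProduct (hF : ∀ i j, Integrable (fun ω => F ω i j) μ) (x y : ι → ℝ) :
    ∫ ω, (F ω *ᵥ x) ⬝ᵥ y ∂μ = ((Matrix.of fun i j => ∫ ω, F ω i j ∂μ) *ᵥ x) ⬝ᵥ y := by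
  simp only [dotProduct]
  rw [integral_finsetSum _ fun i _ => (integrable_mulVec_apply hF x i).mul_const (y i)]
  simp only [integral_mul_const, integral_mulVec_apply hF]

variable [IsProbabilityMeasure μ]

theorem ae_eq_const_of_ae_le_of_le_integral {f : Ω → ℝ} {c : ℝ}
    (hf : Integrable f μ) (hfc : ∀ᵐ ω ∂μ, f ω ≤ c) (hc : c ≤ ∫ ω, f ω ∂μ) :
    ∀ᵐ ω ∂μ, f ω = c := by
  refine (integral_eq_iff_of_ae_le hf (integrable_const c) hfc).mp (le_antisymm ?_ ?_)
  · exact integral_mono_ae hf (integrable_const c) hfc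
  · simpa using hc

theorem integral_sub_mulVec_dotProduct (hF : ∀ i j, Integrable (fun ω => F ω i j) μ)
    (C : Matrix ι ι ℝ) (x y : ι → ℝ) :
    ∫ ω, ((F ω - C) *ᵥ x) ⬝ᵥ y ∂μ = (((Matrix.of fun i j => ∫ ω, F ω i j ∂μ) - C) *ᵥ x) ⬝ᵥ y := by
  simp only [sub_mulVec, sub_dotProduct]
  rw [integral_sub (integrable_mulVec_dotProduct hF x y) (integrable_const _),
    integral_mulVec_dotProduct hF]
  simp

theorem integral_mulVec_eq_self_of_ae (hF : ∀ i j, Integrable (fun ω => F ω i j) μ)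
    {v : ι → ℝ} (hv : ∀ᵐ ω ∂μ, F ω *ᵥ v = v) :
    (Matrix.of fun i j => ∫ ω, F ω i j ∂μ) *ᵥ v = v := by
  ext i
  rw [← integral_mulVec_apply hF, integral_congr_ae (hv.mono fun _ h => congrFun h i)]
  simp

end Integral

section RandomDoublyStochastic

variable {Ω : Type*} [MeasurableSpace Ω] {μ : Measure Ω} [IsProbabilityMeasure μ] {n : ℕ}
  {W : Ω → Matrix (Fin n) (Fin n) ℝ}

theorem integral_mul_self_sub_averagingMatrix_mulVec_dotProduct_nonneg
    (hWW : ∀ i j, Integrable (fun ω => (W ω * W ω) i j) μ)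
    (hds : ∀ᵐ ω ∂μ, IsDoublyStochastic (W ω)) (hsym : ∀ᵐ ω ∂μ, (W ω).IsSymm)
    (hn : n ≠ 0) (v : Fin n → ℝ) :
    0 ≤ (((Matrix.of fun i j => ∫ ω, (W ω * W ω) i j ∂μ) - averagingMatrix n) *ᵥ v) ⬝ᵥ v := by
  rw [← integral_sub_mulVec_dotProduct hWW]
  refine integral_nonneg_of_ae ?_
  filter_upwards [hds, hsym] with ω hdsω hsymω
  exact hdsω.mul_self_sub_averagingMatrix_mulVec_dotProduct_nonneg hsymω hn v

theorem ae_mulVec_eq_self_of_le_integral_mul_self_sub_averagingMatrix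
    (hWW : ∀ i j, Integrable (fun ω => (W ω * W ω) i j) μ)
    (hds : ∀ᵐ ω ∂μ, IsDoublyStochastic (W ω)) (hsym : ∀ᵐ ω ∂μ, (W ω).IsSymm)
    (hdiag : ∀ᵐ ω ∂μ, ∀ i, 0 < W ω i i) (hn : n ≠ 0) {v : Fin n → ℝ}
    (hv : v ⬝ᵥ v ≤
      (((Matrix.of fun i j => ∫ ω, (W ω * W ω) i j ∂μ) - averagingMatrix n) *ᵥ v) ⬝ᵥ v) :
    ∀ᵐ ω ∂μ, W ω *ᵥ v = v ∧ averagingMatrix n *ᵥ v = 0 := by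
  rw [← integral_sub_mulVec_dotProduct hWW] at hv
  have hquad := ae_eq_const_of_ae_le_of_le_integral
    (integrable_mulVec_dotProduct (fun i j => (hWW i j).sub (integrable_const _)) v v)
    (by filter_upwards [hds, hsym] with ω hdsω hsymω
        exact hdsω.mul_self_sub_averagingMatrix_mulVec_dotProduct_le hsymω hn v) hv
  filter_upwards [hds, hsym, hdiag, hquad] with ω hdsω hsymω hdiagω hquadω
  exact hdsω.mulVec_eq_self_of_le_mul_self_sub_averagingMatrix hsymω hdiagω hn hquadω.ge

end RandomDoublyStochastic

theorem stmt_19_general (n : ℕ) (hn : 1 ≤ n)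
    (Ω : Type) [MeasurableSpace Ω] (μ : Measure Ω) [IsProbabilityMeasure μ]
    (W : Ω → Fin n → Fin n → ℝ)
    (hWint : ∀ i j, Integrable (fun ω => W ω i j) μ)
    (hWsym : ∀ᵐ ω ∂μ, (Matrix.of (W ω)).IsSymm)
    (hWds : ∀ᵐ ω ∂μ, IsDoublyStochastic (Matrix.of (W ω)))
    (hWdiag : ∀ i, ∀ᵐ ω ∂μ, 0 < W ω i i)
    (hEW : ‖Matrix.toEuclideanCLM (𝕜 := ℝ) (n := Fin n)
        ((Matrix.of fun i j => ∫ ω, W ω i j ∂μ) -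
          (n : ℝ)⁻¹ • Matrix.of (fun _ _ => (1 : ℝ)))‖ < 1) :
    ‖Matrix.toEuclideanCLM (𝕜 := ℝ) (n := Fin n)
        ((Matrix.of fun i j => ∫ ω, (Matrix.of (W ω) * Matrix.of (W ω)) i j ∂μ) -
          (n : ℝ)⁻¹ • Matrix.of (fun _ _ => (1 : ℝ)))‖ < 1 := by
  set W' : Ω → Matrix (Fin n) (Fin n) ℝ := fun ω => Matrix.of (W ω)
  have hn0 : n ≠ 0 := by omega
  have : Nonempty (Fin n) := ⟨⟨0, by omega⟩⟩
  have hWW := integrable_mul_apply (F := W') hWint hWint (hWds.mono fun _ h => h.abs_le_one)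
  have hWWsym : ∀ᵐ ω ∂μ, (W' ω * W' ω).IsSymm :=
    hWsym.mono fun _ h => by simpa only [sq] using h.pow 2
  change ‖toEuclideanCLM (𝕜 := ℝ) (n := Fin n) (_ - averagingMatrix n)‖ < 1 at hEW ⊢
  obtain ⟨v, hv1, hnorm⟩ := ((isSymm_integral_of_ae hWWsym).sub
    isSymm_averagingMatrix).exists_dotProduct_self_eq_one_norm_toEuclideanCLM_le
  by_contra! h1
  have hnonneg :=
    integral_mul_self_sub_averagingMatrix_mulVec_dotProduct_nonneg hWW hWds hWsym hn0 v
  have hfix := ae_mulVec_eq_self_of_le_integral_mul_self_sub_averagingMatrix hWW hWds hWsym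
    (ae_all_iff.mpr hWdiag) hn0 (v := v) (by linarith [abs_of_nonneg hnonneg])
  obtain ⟨_, -, hJv⟩ := hfix.exists
  refine hEW.not_ge (one_le_norm_toEuclideanCLM_of_mulVec_eq_self (v := v) ?_ ?_)
  · rintro rfl
    simp at hv1
  · rw [sub_mulVec, hJv, sub_zero]
    exact integral_mulVec_eq_self_of_ae (F := W') hWint (hfix.mono fun _ h => h.1)

/-- if the mean network is connected (‖E[W] − (1/n)11ᵀ‖ < 1),
then so is the network associated with E[W²]. -/
theorem stmt_19 (n : ℕ) (hn : 1 ≤ n)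
    (Ω : Type) [MeasurableSpace Ω] (μ : Measure Ω) [IsProbabilityMeasure μ]
    (W : Ω → Fin n → Fin n → ℝ) (hWmeas : Measurable W)
    (hWint : ∀ i j, Integrable (fun ω => W ω i j) μ)
    (hWsym : ∀ᵐ ω ∂μ, (Matrix.of (W ω)).IsSymm)
    (hWds : ∀ᵐ ω ∂μ, IsDoublyStochastic (Matrix.of (W ω)))
    (hWdiag : ∀ i, ∀ᵐ ω ∂μ, 0 < W ω i i)
    (hEW : ‖Matrix.toEuclideanCLM (𝕜 := ℝ) (n := Fin n)
        ((Matrix.of fun i j => ∫ ω, W ω i j ∂μ) -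
          (n : ℝ)⁻¹ • Matrix.of (fun _ _ => (1 : ℝ)))‖ < 1) :
    ‖Matrix.toEuclideanCLM (𝕜 := ℝ) (n := Fin n)
        ((Matrix.of fun i j => ∫ ω, (Matrix.of (W ω) * Matrix.of (W ω)) i j ∂μ) -
          (n : ℝ)⁻¹ • Matrix.of (fun _ _ => (1 : ℝ)))‖ < 1 :=
  stmt_19_general n hn Ω μ W hWint hWsym hWds hWdiag hEW
end
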